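/- arXiv:cond-mat/0205548 — 2 statements merged into one kernel-verified Lean document; each statement's English description precedes it below -/
import Mathlib

section
/- (Theorem 2(iii), matrix form) Assume t ≠ 0, U ≠ 0, W > 0, and 4I = zW. Then every configuration of the following kinds attains the minimum over all ion configurations of the energy functional E(C) = −(1/2) Σ_{σ=1}^r Tr √((T + U·S_σ(C))²) + H_i^0(C): (a) the two configurations in which all r species fully occupy one sublattice and the other sublattice is empty; (b) for r = 2k even, the C(r,k) configurations in which a k-element subset of species fully occupies Λᵉ and the complementary subset fully occupies Λᵒ; for r = 2k+1 odd, the 2·C(r,k) configurations in which a k-element subset of species fully occupies one sublattice and the complementary (k+1)-element subset fully occupies the other. In particular all these configurations have the same energy E. -/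
open Finset

/-- Occupation number (0 or 1) attached to a Boolean occupancy variable. -/
noncomputable def occ (b : Bool) : ℝ := if b then 1 else 0

/-- Total number of ions at site `x` (as a real number): `n_x = Σ_σ n_{x,σ}`. -/
noncomputable def nsite {V : Type*} {r : ℕ} (C : V → Fin r → Bool) (x : V) : ℝ :=
  ∑ σ : Fin r, occ (C x σ)

/-- Total number of ions at site `x` (as a natural number). -/
def nnat {V : Type*} {r : ℕ} (C : V → Fin r → Bool) (x : V) : ℕ :=
  ∑ σ : Fin r, (if C x σ then 1 else 0)

/-- The classical Hamiltonian
`H_i^0(C) = 2I Σ_x Σ_{σ'<σ''} (n_{x,σ'} - 1/2)(n_{x,σ''} - 1/2)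
          + (W/2) Σ_{⟨x,y⟩} (n_x - r/2)(n_y - r/2)`,
where the sum over edges `⟨x,y⟩` (each edge counted once) is written as half the
symmetric double sum over ordered adjacent pairs. -/
noncomputable def H0 {V : Type*} [Fintype V] (G : SimpleGraph V) [DecidableRel G.Adj]
    (r : ℕ) (I W : ℝ) (C : V → Fin r → Bool) : ℝ :=
  2 * I * ∑ x : V, ∑ p ∈ Finset.univ.filter (fun p : Fin r × Fin r => p.1 < p.2),
      (occ (C x p.1) - 1 / 2) * (occ (C x p.2) - 1 / 2)
  + W / 2 * ((∑ x : V, ∑ y : V,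
      (if G.Adj x y then (nsite C x - r / 2) * (nsite C y - r / 2) else 0)) / 2)

/-- Hopping matrix: `T_{xy} = t` if `{x,y}` is an edge of `G`, and `0` otherwise. -/
noncomputable def hopMat {V : Type*} (G : SimpleGraph V) [DecidableRel G.Adj]
    (t : ℝ) : Matrix V V ℝ :=
  Matrix.of fun x y => if G.Adj x y then t else 0

/-- Diagonal matrix `S_σ(C)` with entries `(S_σ)_{xx} = 2 n_{x,σ} − 1`. -/
noncomputable def ionMat {V : Type*} [DecidableEq V] {r : ℕ}
    (C : V → Fin r → Bool) (σ : Fin r) : Matrix V V ℝ :=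
  Matrix.diagonal fun x => 2 * occ (C x σ) - 1

/-- `Tr √(A²)`: the trace of the positive semidefinite square root of `A²`
(defined whenever `A²` is positive semidefinite, e.g. for symmetric `A`). -/
noncomputable def trAbs {N : Type*} [Fintype N] [DecidableEq N] (A : Matrix N N ℝ) : ℝ :=
  letI := Classical.dec ((A * A).PosSemidef)
  if h : (A * A).PosSemidef then
    ((h.1.eigenvectorUnitary : Matrix N N ℝ) *
      Matrix.diagonal ((RCLike.ofReal : ℝ → ℝ) ∘ (Real.sqrt ∘ h.1.eigenvalues)) *
      (star h.1.eigenvectorUnitary : Matrix N N ℝ)).trace else 0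

/-- The ground-state energy functional at the hole–particle symmetry point:
`E(C) = −(1/2) Σ_σ Tr √((T + U·S_σ(C))²) + H_i^0(C)`. -/
noncomputable def Efun {V : Type*} [Fintype V] [DecidableEq V] (G : SimpleGraph V)
    [DecidableRel G.Adj] (r : ℕ) (t U I W : ℝ) (C : V → Fin r → Bool) : ℝ :=
  -(1 / 2) * ∑ σ : Fin r, trAbs (hopMat G t + U • ionMat C σ) + H0 G r I W C

/-!
Conjugation by the sublattice sign `ε` fixes the diagonal `S = S_σ(C)` and flips the sign of
the hopping matrix `T`, so `T + U S` and `T - U S` have the same trace norm, while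
`(T + U S)² + (T - U S)² = 2 (T² + U²)` because `S² = 1`. Concavity of `tr √·`, in the form
`tr √M ≤ (tr (M B⁻¹) + tr B) / 2` with `B = √(T² + U²)`, then bounds every species' trace norm
by `tr √(T² + U²)`, with equality when `T S + S T = 0`, i.e. when the species alternates along
every edge. At `4I = zW` the classical energy is `(W/8) Σ_{x ~ y} (n_x + n_y - r)²` up to a
constant, which is smallest when `n_x + n_y = r` on every edge. The listed configurations
alternate in every species, so they minimize both parts at once.
-/

open scoped MatrixOrder
open Matrix

section TraceSqrt

variable {n : Type*} [Fintype n]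

lemma Matrix.IsHermitian.posSemidef_mul_self {A : Matrix n n ℝ}
    (hA : A.IsHermitian) : (A * A).PosSemidef := by
  have := posSemidef_conjTranspose_mul_self A
  rwa [hA.eq] at this

variable [DecidableEq n]

lemma trAbs_eq_trace_sqrt {A : Matrix n n ℝ} (hA : (A * A).PosSemidef) :
    trAbs A = (CFC.sqrt (A * A)).trace := by
  rw [trAbs, dif_pos hA, CFC.sqrt_eq_real_sqrt _ hA.nonneg, cfcₙ_eq_cfc (hf0 := by simp),
    hA.1.cfc_eq]
  rfl

lemma Matrix.IsHermitian.trAbs_eq_trace_sqrt {A : Matrix n n ℝ} (hA : A.IsHermitian) :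
    trAbs A = (CFC.sqrt (A * A)).trace :=
  _root_.trAbs_eq_trace_sqrt hA.posSemidef_mul_self

lemma trace_sqrt_conj_of_involution {M e : Matrix n n ℝ} (hM : 0 ≤ M) (he : e.IsHermitian)
    (he2 : e * e = 1) : (CFC.sqrt (e * M * e)).trace = (CFC.sqrt M).trace := by
  have hsqrt : CFC.sqrt (e * M * e) = e * CFC.sqrt M * e := by
    refine CFC.sqrt_unique ?_ ?_
    · simp only [Matrix.mul_assoc, ← Matrix.mul_assoc e e, he2, Matrix.one_mul]
      rw [← Matrix.mul_assoc (CFC.sqrt M), CFC.sqrt_mul_sqrt_self M hM]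
    · have := (CFC.sqrt_nonneg M).posSemidef.mul_mul_conjTranspose_same e
      rw [he.eq] at this
      exact this.nonneg
  rw [hsqrt, trace_mul_cycle, he2, Matrix.one_mul]

/-- The inequality `(X - B) B⁻¹ (X - B) ≥ 0` for `X = √M`, traced. -/
lemma trace_sqrt_le {M B : Matrix n n ℝ} (hM : 0 ≤ M) (hB : B.PosDef) :
    (CFC.sqrt M).trace ≤ ((M * B⁻¹).trace + B.trace) / 2 := by
  set X := CFC.sqrt M
  have hX : Xᴴ = X := (CFC.sqrt_nonneg M).posSemidef.1
  have hBB : B * B⁻¹ = 1 := mul_nonsing_inv _ hB.det_pos.ne'.isUnit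
  have hBB' : B⁻¹ * B = 1 := nonsing_inv_mul _ hB.det_pos.ne'.isUnit
  have hpsd : ((X - B) * B⁻¹ * (X - B)).PosSemidef := by
    have := hB.inv.posSemidef.mul_mul_conjTranspose_same (X - B)
    rwa [conjTranspose_sub, hX, hB.1.eq] at this
  have hexp : (X - B) * B⁻¹ * (X - B) = X * B⁻¹ * X - X - X + B := by
    simp only [sub_mul, mul_sub, hBB, one_mul, Matrix.mul_assoc, hBB', mul_one]
    abel
  have hcyc : (X * B⁻¹ * X).trace = (M * B⁻¹).trace := by
    rw [trace_mul_cycle, CFC.sqrt_mul_sqrt_self M hM]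
  have := hpsd.trace_nonneg
  rw [hexp, trace_add, trace_sub, trace_sub, hcyc] at this
  linarith

lemma trAbs_add_trAbs_le {A A' D : Matrix n n ℝ} (hA : A.IsHermitian) (hA' : A'.IsHermitian)
    (hD : D.PosDef) (hsum : A * A + A' * A' = (2 : ℝ) • D) :
    trAbs A + trAbs A' ≤ 2 * (CFC.sqrt D).trace := by
  set B := CFC.sqrt D
  have hB : B.PosDef := (CFC.sqrt_nonneg D).posSemidef.posDef_iff_isUnit.mpr
    (CFC.isUnit_sqrt_iff_isStrictlyPositive.mpr hD.isStrictlyPositive)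
  have hDB : D * B⁻¹ = B := by
    rw [← CFC.sqrt_mul_sqrt_self D hD.posSemidef.nonneg, Matrix.mul_assoc,
      mul_nonsing_inv _ hB.det_pos.ne'.isUnit, Matrix.mul_one]
  have hsumtr : (A * A * B⁻¹).trace + (A' * A' * B⁻¹).trace = 2 * B.trace := by
    rw [← trace_add, ← Matrix.add_mul, hsum, smul_mul_assoc, hDB, trace_smul, smul_eq_mul]
  rw [hA.trAbs_eq_trace_sqrt, hA'.trAbs_eq_trace_sqrt]
  linarith [trace_sqrt_le hA.posSemidef_mul_self.nonneg hB,
    trace_sqrt_le hA'.posSemidef_mul_self.nonneg hB]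

lemma trAbs_add_smul_le {T S ε : Matrix n n ℝ} (hT : T.IsHermitian) (hS : S.IsHermitian)
    (hS2 : S * S = 1) (hε : ε.IsHermitian) (hε2 : ε * ε = 1) (hεT : ε * T * ε = -T)
    (hεS : ε * S * ε = S) {U : ℝ} (hU : U ≠ 0) :
    trAbs (T + U • S) ≤ (CFC.sqrt (T * T + U ^ 2 • 1)).trace := by
  have hplus : (T + U • S).IsHermitian := hT.add (hS.smul (.all U))
  have hminus : (T - U • S).IsHermitian := hT.sub (hS.smul (.all U))
  have hsum : (T + U • S) * (T + U • S) + (T - U • S) * (T - U • S)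
      = (2 : ℝ) • (T * T + U ^ 2 • 1) := by
    simp only [add_mul, mul_add, sub_mul, mul_sub, smul_mul_assoc, mul_smul_comm, hS2]
    module
  have hconj : ε * (T + U • S) * ε = -(T - U • S) := by
    rw [Matrix.mul_add, Matrix.add_mul, mul_smul_comm, smul_mul_assoc, hεT, hεS]
    abel
  have hflip : (T - U • S) * (T - U • S) = ε * ((T + U • S) * (T + U • S)) * ε := by
    rw [← neg_mul_neg, ← hconj]
    simp only [Matrix.mul_assoc, ← Matrix.mul_assoc ε ε, hε2, Matrix.one_mul]
  have heq : trAbs (T - U • S) = trAbs (T + U • S) := by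
    rw [hminus.trAbs_eq_trace_sqrt, hflip,
      trace_sqrt_conj_of_involution hplus.posSemidef_mul_self.nonneg hε hε2,
      hplus.trAbs_eq_trace_sqrt]
  have hD : (T * T + U ^ 2 • (1 : Matrix n n ℝ)).PosDef :=
    PosDef.posSemidef_add hT.posSemidef_mul_self (PosDef.one.smul (by positivity))
  linarith [trAbs_add_trAbs_le hplus hminus hD hsum]

lemma trAbs_add_smul_of_anticommute {T S : Matrix n n ℝ} (hT : T.IsHermitian)
    (hS : S.IsHermitian) (hS2 : S * S = 1) (hTS : T * S + S * T = 0) (U : ℝ) :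
    trAbs (T + U • S) = (CFC.sqrt (T * T + U ^ 2 • 1)).trace := by
  rw [(hT.add (hS.smul (.all U))).trAbs_eq_trace_sqrt]
  congr 2
  calc (T + U • S) * (T + U • S) = T * T + U • (T * S + S * T) + U ^ 2 • (S * S) := by
        simp only [add_mul, mul_add, smul_mul_assoc, mul_smul_comm, smul_smul, smul_add]
        module
    _ = T * T + U ^ 2 • 1 := by rw [hTS, hS2, smul_zero, add_zero]

end TraceSqrt

lemma two_mul_sum_filter_lt_mul {ι R : Type*} [Fintype ι] [LinearOrder ι] [CommRing R]
    (f : ι → R) :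
    2 * ∑ p ∈ univ.filter (fun p : ι × ι => p.1 < p.2), f p.1 * f p.2
      = (∑ i, f i) ^ 2 - ∑ i, f i ^ 2 := by
  have hsplit : ∀ i j, f i * f j = (if i < j then f i * f j else 0)
      + (if j < i then f j * f i else 0) + (if i = j then f i ^ 2 else 0) := by
    intro i j
    rcases lt_trichotomy i j with h | rfl | h
    · simp [h, h.not_gt, h.ne]
    · simp [sq]
    · simp [h, h.not_gt, h.ne', mul_comm]
  have hlt : ∑ p ∈ univ.filter (fun p : ι × ι => p.1 < p.2), f p.1 * f p.2
      = ∑ i, ∑ j, if i < j then f i * f j else 0 := by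
    rw [sum_filter, ← univ_product_univ, sum_product]
  rw [sq, sum_mul_sum, hlt, sum_congr rfl fun i _ => sum_congr rfl fun j _ => hsplit i j]
  simp only [sum_add_distrib, sum_ite_eq, mem_univ, if_true]
  rw [sum_comm (f := fun i j => if j < i then f j * f i else 0)]
  ring

lemma occ_add_occ_of_ne {a b : Bool} (h : a ≠ b) : occ a + occ b = 1 := by
  cases a <;> cases b <;> simp_all [occ]

section Lattice

variable {V : Type*}

lemma isHermitian_hopMat (G : SimpleGraph V) [DecidableRel G.Adj] (t : ℝ) :
    (hopMat G t).IsHermitian := by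
  ext x y
  simp [hopMat, G.adj_comm]

def IsCheckerboard (G : SimpleGraph V) {r : ℕ} (C : V → Fin r → Bool) : Prop :=
  ∀ σ x y, G.Adj x y → C x σ ≠ C y σ

variable {G : SimpleGraph V}

lemma mem_iff_not_mem_of_adj {Λ Λ' : Finset V} (hdisj : Disjoint Λ Λ')
    (hbip : ∀ x y, G.Adj x y → (x ∈ Λ ∧ y ∈ Λ') ∨ (x ∈ Λ' ∧ y ∈ Λ)) (x y : V)
    (h : G.Adj x y) : x ∈ Λ ↔ y ∉ Λ := by
  rcases hbip x y h with ⟨hx, hy⟩ | ⟨hx, hy⟩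
  · exact iff_of_true hx (disjoint_right.mp hdisj hy)
  · exact iff_of_false (disjoint_right.mp hdisj hx) (not_not.mpr hy)

lemma nsite_add_nsite_of_isCheckerboard {r : ℕ} {C : V → Fin r → Bool}
    (hC : IsCheckerboard G C) {x y : V} (h : G.Adj x y) : nsite C x + nsite C y = r := by
  rw [nsite, nsite, ← sum_add_distrib, sum_congr rfl fun σ _ => occ_add_occ_of_ne (hC σ x y h)]
  simp

variable [DecidableRel G.Adj] [DecidableEq V]

lemma isHermitian_ionMat {r : ℕ} (C : V → Fin r → Bool) (σ : Fin r) :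
    (ionMat C σ).IsHermitian :=
  isHermitian_diagonal _

def sublatticeSign (Λ : Finset V) : Matrix V V ℝ :=
  diagonal fun x => if x ∈ Λ then 1 else -1

lemma isHermitian_sublatticeSign (Λ : Finset V) : (sublatticeSign Λ).IsHermitian :=
  isHermitian_diagonal _

variable [Fintype V]

lemma ionMat_mul_self {r : ℕ} (C : V → Fin r → Bool) (σ : Fin r) :
    ionMat C σ * ionMat C σ = 1 := by
  rw [ionMat, diagonal_mul_diagonal, ← diagonal_one]
  congr 1
  funext x
  cases C x σ <;> norm_num [occ]

lemma sublatticeSign_mul_self (Λ : Finset V) : sublatticeSign Λ * sublatticeSign Λ = 1 := by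
  rw [sublatticeSign, diagonal_mul_diagonal, ← diagonal_one]
  congr 1
  funext x
  split_ifs <;> norm_num

lemma sublatticeSign_mul_diagonal_mul (Λ : Finset V) (d : V → ℝ) :
    sublatticeSign Λ * diagonal d * sublatticeSign Λ = diagonal d := by
  rw [sublatticeSign, diagonal_mul_diagonal, diagonal_mul_diagonal]
  congr 1
  funext x
  split_ifs <;> ring

lemma sublatticeSign_mul_hopMat_mul {Λ : Finset V} (hΛ : ∀ x y, G.Adj x y → (x ∈ Λ ↔ y ∉ Λ))
    (t : ℝ) : sublatticeSign Λ * hopMat G t * sublatticeSign Λ = -hopMat G t := by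
  ext x y
  simp only [sublatticeSign, mul_diagonal, diagonal_mul, hopMat, of_apply]
  by_cases h : G.Adj x y
  · by_cases hx : x ∈ Λ
    · simp [h, hx, (hΛ x y h).mp hx]
    · simp [h, hx, not_not.mp (mt (hΛ x y h).mpr hx)]
  · simp [h]

lemma hopMat_mul_ionMat_add {r : ℕ} {C : V → Fin r → Bool} (hC : IsCheckerboard G C)
    (t : ℝ) (σ : Fin r) : hopMat G t * ionMat C σ + ionMat C σ * hopMat G t = 0 := by
  ext x y
  simp only [Matrix.add_apply, ionMat, mul_diagonal, diagonal_mul, Matrix.zero_apply, hopMat,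
    of_apply]
  by_cases h : G.Adj x y
  · rw [if_pos h]
    linear_combination (2 * t) * occ_add_occ_of_ne (hC σ x y h)
  · simp [h]

lemma trAbs_hopMat_add_ionMat_le {Λ : Finset V} (hΛ : ∀ x y, G.Adj x y → (x ∈ Λ ↔ y ∉ Λ))
    (t : ℝ) {U : ℝ} (hU : U ≠ 0) {r : ℕ} (C : V → Fin r → Bool) (σ : Fin r) :
    trAbs (hopMat G t + U • ionMat C σ)
      ≤ (CFC.sqrt (hopMat G t * hopMat G t + U ^ 2 • 1)).trace :=
  trAbs_add_smul_le (isHermitian_hopMat G t) (isHermitian_ionMat C σ) (ionMat_mul_self C σ)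
    (isHermitian_sublatticeSign Λ) (sublatticeSign_mul_self Λ)
    (sublatticeSign_mul_hopMat_mul hΛ t) (sublatticeSign_mul_diagonal_mul Λ _) hU

lemma trAbs_hopMat_add_ionMat_of_isCheckerboard {r : ℕ} {C : V → Fin r → Bool}
    (hC : IsCheckerboard G C) (t U : ℝ) (σ : Fin r) :
    trAbs (hopMat G t + U • ionMat C σ)
      = (CFC.sqrt (hopMat G t * hopMat G t + U ^ 2 • 1)).trace :=
  trAbs_add_smul_of_anticommute (isHermitian_hopMat G t) (isHermitian_ionMat C σ)
    (ionMat_mul_self C σ) (hopMat_mul_ionMat_add hC t σ) U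

end Lattice

section ClassicalEnergy

variable {V : Type*} [Fintype V] {G : SimpleGraph V} [DecidableRel G.Adj] {z : ℕ}

lemma sum_adj_const (hreg : G.IsRegularOfDegree z) (x : V) (c : ℝ) :
    ∑ y, (if G.Adj x y then c else 0) = z * c := by
  rw [← sum_filter, sum_const, ← SimpleGraph.neighborFinset_eq_filter,
    SimpleGraph.card_neighborFinset_eq_degree, hreg x, nsmul_eq_mul]

lemma sum_adj_add_sq (hreg : G.IsRegularOfDegree z) (g : V → ℝ) :
    ∑ x, ∑ y, (if G.Adj x y then (g x + g y) ^ 2 else 0)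
      = 2 * z * ∑ x, g x ^ 2 + 2 * ∑ x, ∑ y, (if G.Adj x y then g x * g y else 0) := by
  have hexp : ∀ x y, (if G.Adj x y then (g x + g y) ^ 2 else 0)
      = (if G.Adj x y then g x ^ 2 else 0) + (if G.Adj y x then g y ^ 2 else 0)
        + 2 * (if G.Adj x y then g x * g y else 0) := by
    intro x y
    by_cases h : G.Adj x y
    · simp only [if_pos h, if_pos h.symm]
      ring
    · simp only [if_neg h, if_neg (mt G.adj_symm h)]
      ring
  simp_rw [hexp, sum_add_distrib, ← mul_sum]
  rw [sum_comm (f := fun x y => if G.Adj y x then g y ^ 2 else 0)]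
  simp_rw [sum_adj_const hreg, ← mul_sum]
  ring

lemma two_mul_sum_filter_lt_occ {r : ℕ} (b : Fin r → Bool) :
    2 * ∑ p ∈ univ.filter (fun p : Fin r × Fin r => p.1 < p.2),
        (occ (b p.1) - 1 / 2) * (occ (b p.2) - 1 / 2)
      = (∑ σ, occ (b σ) - r / 2) ^ 2 - r / 4 := by
  have hsq : ∀ σ, (occ (b σ) - 1 / 2) ^ 2 = 1 / 4 := fun σ => by
    cases b σ <;> norm_num [occ]
  have := two_mul_sum_filter_lt_mul fun σ => occ (b σ) - 1 / 2
  rw [this, sum_congr rfl fun σ _ => hsq σ, sum_sub_distrib]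
  simp only [sum_const, card_univ, Fintype.card_fin, nsmul_eq_mul]
  ring

variable {r : ℕ} {I W : ℝ}

/-- At `4I = zW` the on-site term completes the square of the bond term. -/
lemma H0_eq (hreg : G.IsRegularOfDegree z) (hIW : 4 * I = z * W) (C : V → Fin r → Bool) :
    H0 G r I W C = W / 8 * ∑ x, ∑ y, (if G.Adj x y then (nsite C x + nsite C y - r) ^ 2 else 0)
      - I * r * Fintype.card V / 4 := by
  set g : V → ℝ := fun x => nsite C x - r / 2
  have hbond : ∀ x y, nsite C x + nsite C y - r = g x + g y := fun x y => by simp only [g]; ring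
  have honsite : ∀ x, ∑ p ∈ univ.filter (fun p : Fin r × Fin r => p.1 < p.2),
      (occ (C x p.1) - 1 / 2) * (occ (C x p.2) - 1 / 2) = (g x ^ 2 - r / 4) / 2 := fun x => by
    rw [eq_div_iff two_ne_zero, mul_comm, two_mul_sum_filter_lt_occ]
    rfl
  simp_rw [hbond, sum_adj_add_sq hreg, H0, honsite]
  rw [← sum_div, sum_sub_distrib, sum_const, card_univ, nsmul_eq_mul]
  have hI : I = z * W / 4 := by linarith
  subst hI
  ring

lemma H0_of_isCheckerboard (hreg : G.IsRegularOfDegree z) (hIW : 4 * I = z * W)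
    {C : V → Fin r → Bool} (hC : IsCheckerboard G C) :
    H0 G r I W C = -(I * r * Fintype.card V / 4) := by
  rw [H0_eq hreg hIW, sum_eq_zero fun x _ => sum_eq_zero fun y _ => ?_]
  · ring
  · split_ifs with h
    · rw [nsite_add_nsite_of_isCheckerboard hC h, sub_self, sq, mul_zero]
    · rfl

lemma neg_le_H0 (hreg : G.IsRegularOfDegree z) (hW : 0 ≤ W) (hIW : 4 * I = z * W)
    (C : V → Fin r → Bool) : -(I * r * Fintype.card V / 4) ≤ H0 G r I W C := by
  have hbond : 0 ≤ ∑ x, ∑ y, (if G.Adj x y then (nsite C x + nsite C y - r) ^ 2 else 0) :=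
    sum_nonneg fun x _ => sum_nonneg fun y _ => by split_ifs <;> positivity
  rw [H0_eq hreg hIW]
  nlinarith [mul_nonneg hW hbond]

end ClassicalEnergy

theorem Efun_le_of_isCheckerboard {V : Type*} [Fintype V] [DecidableEq V] {G : SimpleGraph V}
    [DecidableRel G.Adj] {Λ : Finset V} (hΛ : ∀ x y, G.Adj x y → (x ∈ Λ ↔ y ∉ Λ)) {z r : ℕ}
    (hreg : G.IsRegularOfDegree z) {t U I W : ℝ} (hU : U ≠ 0) (hW : 0 ≤ W)
    (hIW : 4 * I = z * W) {C : V → Fin r → Bool} (hC : IsCheckerboard G C)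
    (C' : V → Fin r → Bool) : Efun G r t U I W C ≤ Efun G r t U I W C' := by
  set τ := (CFC.sqrt (hopMat G t * hopMat G t + U ^ 2 • 1)).trace
  have hC_el : ∑ σ, trAbs (hopMat G t + U • ionMat C σ) = r * τ := by
    simp [trAbs_hopMat_add_ionMat_of_isCheckerboard hC, τ]
  have hC'_el : ∑ σ, trAbs (hopMat G t + U • ionMat C' σ) ≤ r * τ :=
    (sum_le_sum fun σ _ => trAbs_hopMat_add_ionMat_le hΛ t hU C' σ).trans_eq (by simp [τ])
  rw [Efun, Efun, hC_el, H0_of_isCheckerboard hreg hIW hC]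
  linarith [neg_le_H0 hreg hW hIW C']

theorem statement14_general
    {V : Type*} [Fintype V] [DecidableEq V]
    (G : SimpleGraph V) [DecidableRel G.Adj]
    (z r : ℕ)
    (hreg : G.IsRegularOfDegree z)
    (Λe Λo : Finset V)
    (hdisj : Disjoint Λe Λo)
    (hbip : ∀ x y : V, G.Adj x y → (x ∈ Λe ∧ y ∈ Λo) ∨ (x ∈ Λo ∧ y ∈ Λe))
    (t U I W : ℝ) (hU : U ≠ 0) (hW : 0 < W) (hIW : 4 * I = (z : ℝ) * W) :
    ∀ C : V → Fin r → Bool,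
      ((C = fun x _ => decide (x ∈ Λe)) ∨ (C = fun x _ => decide (x ∈ Λo)) ∨
        (∃ A : Finset (Fin r), (2 * A.card = r ∨ 2 * A.card + 1 = r) ∧
          (C = (fun x σ => decide ((x ∈ Λe) ↔ σ ∈ A)) ∨
           C = (fun x σ => decide ((x ∈ Λo) ↔ σ ∈ A))))) →
      ∀ C' : V → Fin r → Bool, Efun G r t U I W C ≤ Efun G r t U I W C' := by
  intro C hC C'
  have he := mem_iff_not_mem_of_adj hdisj hbip
  have ho := mem_iff_not_mem_of_adj hdisj.symm fun x y h => (hbip x y h).symm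
  refine Efun_le_of_isCheckerboard he hreg hU hW.le hIW ?_ C'
  rcases hC with rfl | rfl | ⟨A, -, rfl | rfl⟩ <;> intro σ x y h
  · simp [he x y h]
  · simp [ho x y h]
  · by_cases hσ : σ ∈ A <;> simp [he x y h, hσ]
  · by_cases hσ : σ ∈ A <;> simp [ho x y h, hσ]

/-- **Theorem 2(iii), matrix form.** For `t ≠ 0`, `U ≠ 0`, `W > 0`,
`4I = zW`, every configuration of kind (a) (one sublattice fully occupied by all species,
the other empty) or of kind (b) (a set `A` of species with `2|A| = r` or `2|A|+1 = r`
fully occupies one sublattice and the complementary species the other) minimizes `E`;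
in particular all these configurations have the same energy. -/
theorem statement14
    {V : Type*} [Fintype V] [DecidableEq V]
    (G : SimpleGraph V) [DecidableRel G.Adj]
    (z r : ℕ) (hz : 2 ≤ z) (hr : 2 ≤ r)
    (hreg : G.IsRegularOfDegree z) (hconn : G.Connected)
    (Λe Λo : Finset V)
    (hcover : ∀ v : V, v ∈ Λe ∨ v ∈ Λo) (hdisj : Disjoint Λe Λo)
    (hbip : ∀ x y : V, G.Adj x y → (x ∈ Λe ∧ y ∈ Λo) ∨ (x ∈ Λo ∧ y ∈ Λe))
    (t U I W : ℝ) (ht : t ≠ 0) (hU : U ≠ 0) (hW : 0 < W) (hIW : 4 * I = (z : ℝ) * W) :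
    ∀ C : V → Fin r → Bool,
      ((C = fun x _ => decide (x ∈ Λe)) ∨ (C = fun x _ => decide (x ∈ Λo)) ∨
        (∃ A : Finset (Fin r), (2 * A.card = r ∨ 2 * A.card + 1 = r) ∧
          (C = (fun x σ => decide ((x ∈ Λe) ↔ σ ∈ A)) ∨
           C = (fun x σ => decide ((x ∈ Λo) ↔ σ ∈ A))))) →
      ∀ C' : V → Fin r → Bool, Efun G r t U I W C ≤ Efun G r t U I W C' :=
  statement14_general G z r hreg Λe Λo hdisj hbip t U I W hU hW hIW
end

section
/- (Antiferromagnetic ordering of region B by the first-order effective coupling) Let r = 2. Assume W > 0, J > 0, I > zW/4, and |μ| < I + 2zJ. Then the perturbed Hamiltonian H_J(C) = H_i^0(C) − μ·N_i(C) + J Σ_{⟨x,y⟩} (s_{x,↑} s_{y,↑} + s_{x,↓} s_{y,↓}), where s_{x,σ} = 2 n_{x,σ} − 1, attains its minimum over all ion configurations at exactly two configurations: the two Néel configurations in which every site is singly occupied and the species alternates between the sublattices (n_{x,↑} = 1, n_{x,↓} = 0 on Λᵉ and n_{x,↑} = 0, n_{x,↓} = 1 on Λᵒ, or vice versa). In particular,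 the spin degeneracy 2^{|Λ|} of the unperturbed region B is completely removed. -/
open Finset

/-- Total ion number `N_i(C) = Σ_{x,σ} n_{x,σ}` (as a real number). -/
noncomputable def Ni {V : Type*} {r : ℕ} [Fintype V] (C : V → Fin r → Bool) : ℝ :=
  ∑ x : V, ∑ σ : Fin r, occ (C x σ)

/-- Perturbed grand-canonical Hamiltonian
`H_J(C) = H_i^0(C) − μ·N_i(C) + J Σ_{⟨x,y⟩} Σ_σ s_{x,σ} s_{y,σ}`, with
`s_{x,σ} = 2 n_{x,σ} − 1`; the edge sum is written as half the symmetric double sum. -/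
noncomputable def HJ {V : Type*} [Fintype V] (G : SimpleGraph V) [DecidableRel G.Adj]
    (I W μ J : ℝ) (C : V → Fin 2 → Bool) : ℝ :=
  H0 G 2 I W C - μ * Ni C
  + J * ((∑ x : V, ∑ y : V,
      (if G.Adj x y then
        ∑ σ : Fin 2, (2 * occ (C x σ) - 1) * (2 * occ (C y σ) - 1) else 0)) / 2)


/-!
Since `G` is `z`-regular, `z • H_J` is half the sum over ordered adjacent pairs of a bond energy
in which each site contributes its on-site energy once per bond. A check of the sixteen states of
a bond shows that this bond energy is minimal exactly on the two singly occupied, oppositely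
polarised pairs; for instance it exceeds its Néel value by `2I - zW/2` on an empty–double bond,
by `I + 2zJ ± μ` on a bond with one singly occupied end and by `4zJ` on two parallel spins.
So the minimisers of `H_J` are the configurations that are Néel on every bond, and on a
connected bipartite graph without isolated vertices these are the two Néel states.
-/

namespace FalicovKimball

def spinUp : Fin 2 → Bool := ![true, false]

def spinDown : Fin 2 → Bool := ![false, true]

def IsNeelPair (a b : Fin 2 → Bool) : Prop :=
  (a = spinUp ∧ b = spinDown) ∨ (a = spinDown ∧ b = spinUp)

noncomputable def siteEnergy (I μ : ℝ) (a : Fin 2 → Bool) : ℝ :=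
  2 * I * ((occ (a 0) - 1 / 2) * (occ (a 1) - 1 / 2)) - μ * ∑ σ, occ (a σ)

noncomputable def bondCoupling (W J : ℝ) (a b : Fin 2 → Bool) : ℝ :=
  W / 2 * ((∑ σ, occ (a σ) - 1) * (∑ σ, occ (b σ) - 1))
    + J * ∑ σ, (2 * occ (a σ) - 1) * (2 * occ (b σ) - 1)

/-- `z` times the energy of a bond of a `z`-regular lattice: each site gives `1/z` of its
energy to each of its `z` bonds. -/
noncomputable def bondEnergy (z I W μ J : ℝ) (a b : Fin 2 → Bool) : ℝ :=
  siteEnergy I μ a + siteEnergy I μ b + z * bondCoupling W J a b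

lemma bondEnergy_comm (z I W μ J : ℝ) (a b : Fin 2 → Bool) :
    bondEnergy z I W μ J a b = bondEnergy z I W μ J b a := by
  simp only [bondEnergy, bondCoupling]
  simp only [mul_comm (2 * occ (a _) - 1)]
  ring

lemma bondEnergy_of_isNeelPair (z I W μ J : ℝ) {a b : Fin 2 → Bool} (h : IsNeelPair a b) :
    bondEnergy z I W μ J a b = bondEnergy z I W μ J spinUp spinDown := by
  rcases h with ⟨rfl, rfl⟩ | ⟨rfl, rfl⟩
  · rfl
  · exact bondEnergy_comm ..

lemma bondEnergy_spinUp_spinDown_lt {z I W μ J : ℝ} (hz : 0 < z) (hW : 0 < W) (hJ : 0 < J)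
    (hIW : z * W / 4 < I) (hμ : |μ| < I + 2 * z * J) {a b : Fin 2 → Bool}
    (h : ¬ IsNeelPair a b) :
    bondEnergy z I W μ J spinUp spinDown < bondEnergy z I W μ J a b := by
  have hzW := mul_pos hz hW
  have hzJ := mul_pos hz hJ
  obtain ⟨hμ₁, hμ₂⟩ := abs_lt.mp hμ
  obtain ⟨a₀, a₁, rfl⟩ : ∃ a₀ a₁, a = ![a₀, a₁] := ⟨a 0, a 1, (FinVec.etaExpand_eq a).symm⟩
  obtain ⟨b₀, b₁, rfl⟩ : ∃ b₀ b₁, b = ![b₀, b₁] := ⟨b 0, b 1, (FinVec.etaExpand_eq b).symm⟩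
  simp only [bondEnergy, siteEnergy, bondCoupling, Fin.sum_univ_two, spinUp, spinDown,
    Matrix.cons_val_zero, Matrix.cons_val_one]
  cases a₀ <;> cases a₁ <;> cases b₀ <;> cases b₁ <;> simp only [occ] <;> norm_num <;>
    first | linarith | exact h (.inl ⟨rfl, rfl⟩) | exact h (.inr ⟨rfl, rfl⟩)

lemma bondEnergy_spinUp_spinDown_le {z I W μ J : ℝ} (hz : 0 < z) (hW : 0 < W) (hJ : 0 < J)
    (hIW : z * W / 4 < I) (hμ : |μ| < I + 2 * z * J) (a b : Fin 2 → Bool) :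
    bondEnergy z I W μ J spinUp spinDown ≤ bondEnergy z I W μ J a b := by
  by_cases h : IsNeelPair a b
  · rw [bondEnergy_of_isNeelPair _ _ _ _ _ h]
  · exact (bondEnergy_spinUp_spinDown_lt hz hW hJ hIW hμ h).le

section Neel

variable {V : Type*} (G : SimpleGraph V)

def IsNeel (C : V → Fin 2 → Bool) : Prop :=
  ∀ x y, G.Adj x y → IsNeelPair (C x) (C y)

def neel (s : V → Prop) [DecidablePred s] : V → Fin 2 → Bool :=
  fun x σ => decide (s x ↔ σ = 0)

variable {G} {s : V → Prop} [DecidablePred s]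

lemma neel_of_pos {x : V} (h : s x) : neel s x = spinUp := by
  funext σ; fin_cases σ <;> simp [neel, spinUp, h]

lemma neel_of_neg {x : V} (h : ¬ s x) : neel s x = spinDown := by
  funext σ; fin_cases σ <;> simp [neel, spinDown, h]

lemma neel_congr {t : V → Prop} [DecidablePred t] (h : ∀ x, s x ↔ t x) : neel s = neel t := by
  funext x σ; simp [neel, h x]

lemma neel_ne_neel_not [Nonempty V] : neel s ≠ neel (fun x => ¬ s x) := by
  intro h
  obtain ⟨v⟩ := ‹Nonempty V›
  have hv := congrFun (congrFun h v) 0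
  by_cases hs : s v <;> simp [neel, hs] at hv

lemma eq_neel_of_forall {C : V → Fin 2 → Bool} (hsite : ∀ x, C x = spinUp ∨ C x = spinDown)
    (hC : ∀ x, C x = spinUp ↔ s x) : C = neel s := by
  funext x
  by_cases hx : s x
  · rw [neel_of_pos hx, hC x |>.mpr hx]
  · rw [neel_of_neg hx, (hsite x).resolve_left (mt (hC x).mp hx)]

lemma isNeel_neel (hs : ∀ x y, G.Adj x y → (s x ↔ ¬ s y)) : IsNeel G (neel s) := by
  intro x y hxy
  by_cases hx : s x
  · exact .inl ⟨neel_of_pos hx, neel_of_neg ((hs x y hxy).mp hx)⟩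
  · exact .inr ⟨neel_of_neg hx, neel_of_pos (not_not.mp (mt (hs x y hxy).mpr hx))⟩

lemma _root_.SimpleGraph.Preconnected.apply_eq_of_forall_adj {β : Type*} {f : V → β}
    (hG : G.Preconnected) (hf : ∀ x y, G.Adj x y → f x = f y) (x y : V) : f x = f y := by
  obtain ⟨p⟩ := hG x y
  induction p with
  | nil => rfl
  | cons h _ ih => exact (hf _ _ h).trans ih

lemma isNeel_iff (hG : G.Connected) (hnb : ∀ x, ∃ y, G.Adj x y)
    (hs : ∀ x y, G.Adj x y → (s x ↔ ¬ s y)) {C : V → Fin 2 → Bool} :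
    IsNeel G C ↔ C = neel s ∨ C = neel (fun x => ¬ s x) := by
  refine ⟨fun hC => ?_, ?_⟩
  · have hsite : ∀ x, C x = spinUp ∨ C x = spinDown := fun x =>
      let ⟨y, hxy⟩ := hnb x
      (hC x y hxy).imp And.left And.left
    have hbond : ∀ x y, G.Adj x y → (C x = spinUp ↔ s x) = (C y = spinUp ↔ s y) := by
      intro x y hxy
      have hdu : spinDown ≠ spinUp := by decide
      rcases hC x y hxy with ⟨hx, hy⟩ | ⟨hx, hy⟩ <;>
        simp only [hx, hy, hs x y hxy, hdu, eq_iff_iff] <;> tauto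
    obtain ⟨v⟩ := hG.nonempty
    have horient := hG.preconnected.apply_eq_of_forall_adj hbond
    by_cases hv : C v = spinUp ↔ s v
    · exact .inl (eq_neel_of_forall hsite fun x => horient x v ▸ hv)
    · refine .inr (eq_neel_of_forall hsite fun x => ?_)
      have hx : ¬ (C x = spinUp ↔ s x) := horient x v ▸ hv
      tauto
  · rintro (rfl | rfl)
    · exact isNeel_neel hs
    · exact isNeel_neel fun x y hxy => by rw [hs x y hxy]

end Neel

section Lattice

variable {V : Type*} [Fintype V] (G : SimpleGraph V) [DecidableRel G.Adj]

lemma HJ_eq_sum_siteEnergy_add (I W μ J : ℝ) (C : V → Fin 2 → Bool) :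
    HJ G I W μ J C = ∑ x, siteEnergy I μ (C x)
      + (∑ x, ∑ y, if G.Adj x y then bondCoupling W J (C x) (C y) else 0) / 2 := by
  have hpairs : univ.filter (fun p : Fin 2 × Fin 2 => p.1 < p.2) = {(0, 1)} := by decide
  have hcoupling : ∀ x y, (if G.Adj x y then bondCoupling W J (C x) (C y) else 0)
      = W / 2 * (if G.Adj x y then (nsite C x - 1) * (nsite C y - 1) else 0)
        + J * (if G.Adj x y then
            ∑ σ, (2 * occ (C x σ) - 1) * (2 * occ (C y σ) - 1) else 0) := by
    intro x y
    split_ifs <;> simp [bondCoupling, nsite]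
  simp only [HJ, H0, Ni, hpairs, sum_singleton, siteEnergy, hcoupling, sum_add_distrib,
    ← mul_sum, sum_sub_distrib]
  norm_num
  ring

lemma sum_adj_ite_left {z : ℕ} (hreg : G.IsRegularOfDegree z) (f : V → ℝ) :
    ∑ x, ∑ y, (if G.Adj x y then f x else 0) = z * ∑ x, f x := by
  rw [mul_sum]
  refine sum_congr rfl fun x _ => ?_
  rw [← hreg x, G.degree_eq_sum_if_adj, sum_mul]
  simp_rw [boole_mul]

lemma sum_adj_ite_comm (f : V → V → ℝ) :
    ∑ x, ∑ y, (if G.Adj x y then f y x else 0) = ∑ x, ∑ y, (if G.Adj x y then f x y else 0) := by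
  rw [sum_comm]
  simp_rw [G.adj_comm]

lemma mul_HJ_eq_sum_bondEnergy {z : ℕ} (hreg : G.IsRegularOfDegree z) (I W μ J : ℝ)
    (C : V → Fin 2 → Bool) :
    z * HJ G I W μ J C
      = (∑ x, ∑ y, if G.Adj x y then bondEnergy z I W μ J (C x) (C y) else 0) / 2 := by
  have hsplit : ∀ x y, (if G.Adj x y then bondEnergy z I W μ J (C x) (C y) else 0)
      = (if G.Adj x y then siteEnergy I μ (C x) else 0)
        + (if G.Adj x y then siteEnergy I μ (C y) else 0)
        + z * (if G.Adj x y then bondCoupling W J (C x) (C y) else 0) := by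
    intro x y
    split_ifs <;> simp [bondEnergy]
  simp only [hsplit, sum_add_distrib, ← mul_sum,
    sum_adj_ite_comm G (fun y _ => siteEnergy I μ (C y)), sum_adj_ite_left G hreg,
    HJ_eq_sum_siteEnergy_add]
  ring

lemma sum_adj_ite_le_sum_adj_ite {f g : V → V → ℝ} (h : ∀ x y, G.Adj x y → f x y ≤ g x y) :
    ∑ x, ∑ y, (if G.Adj x y then f x y else 0) ≤ ∑ x, ∑ y, (if G.Adj x y then g x y else 0) :=
  sum_le_sum fun x _ => sum_le_sum fun y _ => by split_ifs with hxy <;> simp [h x y, hxy]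

lemma sum_adj_ite_lt_sum_adj_ite {f g : V → V → ℝ} (h : ∀ x y, G.Adj x y → f x y ≤ g x y)
    {x₀ y₀ : V} (hadj : G.Adj x₀ y₀) (hlt : f x₀ y₀ < g x₀ y₀) :
    ∑ x, ∑ y, (if G.Adj x y then f x y else 0) < ∑ x, ∑ y, (if G.Adj x y then g x y else 0) := by
  have hle : ∀ x y, (if G.Adj x y then f x y else 0) ≤ (if G.Adj x y then g x y else 0) :=
    fun x y => by split_ifs with hxy <;> simp [h x y, hxy]
  refine sum_lt_sum (fun x _ => sum_le_sum fun y _ => hle x y) ⟨x₀, mem_univ _, ?_⟩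
  refine sum_lt_sum (fun y _ => hle x₀ y) ⟨y₀, mem_univ _, ?_⟩
  simpa [hadj] using hlt

variable {G} {z : ℕ} {I W μ J : ℝ}

lemma HJ_le_of_isNeel (hz : 0 < z) (hreg : G.IsRegularOfDegree z) (hW : 0 < W) (hJ : 0 < J)
    (hIW : (z : ℝ) * W / 4 < I) (hμ : |μ| < I + 2 * z * J) {C : V → Fin 2 → Bool}
    (hC : IsNeel G C) (C' : V → Fin 2 → Bool) :
    HJ G I W μ J C ≤ HJ G I W μ J C' := by
  have hz' : (0 : ℝ) < z := Nat.cast_pos.mpr hz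
  refine le_of_mul_le_mul_left ?_ hz'
  rw [mul_HJ_eq_sum_bondEnergy G hreg, mul_HJ_eq_sum_bondEnergy G hreg]
  gcongr 1
  refine sum_adj_ite_le_sum_adj_ite G fun x y hxy => ?_
  rw [bondEnergy_of_isNeelPair _ _ _ _ _ (hC x y hxy)]
  exact bondEnergy_spinUp_spinDown_le hz' hW hJ hIW hμ _ _

lemma HJ_lt_of_isNeel_of_not_isNeel (hz : 0 < z) (hreg : G.IsRegularOfDegree z) (hW : 0 < W)
    (hJ : 0 < J) (hIW : (z : ℝ) * W / 4 < I) (hμ : |μ| < I + 2 * z * J)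
    {C C' : V → Fin 2 → Bool} (hC : IsNeel G C) (hC' : ¬ IsNeel G C') :
    HJ G I W μ J C < HJ G I W μ J C' := by
  have hz' : (0 : ℝ) < z := Nat.cast_pos.mpr hz
  refine lt_of_mul_lt_mul_left ?_ hz'.le
  rw [mul_HJ_eq_sum_bondEnergy G hreg, mul_HJ_eq_sum_bondEnergy G hreg]
  gcongr 1
  obtain ⟨x₀, y₀, hadj, hx₀y₀⟩ : ∃ x y, G.Adj x y ∧ ¬ IsNeelPair (C' x) (C' y) := by
    simpa [IsNeel] using hC'
  refine sum_adj_ite_lt_sum_adj_ite G (fun x y hxy => ?_) hadj ?_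
  · rw [bondEnergy_of_isNeelPair _ _ _ _ _ (hC x y hxy)]
    exact bondEnergy_spinUp_spinDown_le hz' hW hJ hIW hμ _ _
  · rw [bondEnergy_of_isNeelPair _ _ _ _ _ (hC x₀ y₀ hadj)]
    exact bondEnergy_spinUp_spinDown_lt hz' hW hJ hIW hμ hx₀y₀

lemma setOf_forall_HJ_le_eq (hz : 0 < z) (hreg : G.IsRegularOfDegree z) (hW : 0 < W)
    (hJ : 0 < J) (hIW : (z : ℝ) * W / 4 < I) (hμ : |μ| < I + 2 * z * J)
    {C₀ : V → Fin 2 → Bool} (hC₀ : IsNeel G C₀) :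
    {C | ∀ C', HJ G I W μ J C ≤ HJ G I W μ J C'} = {C | IsNeel G C} := by
  ext C
  refine ⟨fun hC => ?_, fun hC => HJ_le_of_isNeel hz hreg hW hJ hIW hμ hC⟩
  by_contra hC'
  exact (hC C₀).not_gt (HJ_lt_of_isNeel_of_not_isNeel hz hreg hW hJ hIW hμ hC₀ hC')

end Lattice

end FalicovKimball

open FalicovKimball

/-- **antiferromagnetic ordering of region B.** For `W > 0`, `J > 0`,
`I > zW/4` and `|μ| < I + 2zJ`, the minimizers of `H_J` are exactly the two Néel
configurations in which every site is singly occupied and the species alternates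
between the sublattices; in particular the `2^{|Λ|}` spin degeneracy is removed. -/
theorem statement19
    {V : Type*} [Fintype V] [DecidableEq V]
    (G : SimpleGraph V) [DecidableRel G.Adj]
    (z : ℕ) (hz : 2 ≤ z)
    (hreg : G.IsRegularOfDegree z) (hconn : G.Connected)
    (Λe Λo : Finset V)
    (hcover : ∀ v : V, v ∈ Λe ∨ v ∈ Λo) (hdisj : Disjoint Λe Λo)
    (hbip : ∀ x y : V, G.Adj x y → (x ∈ Λe ∧ y ∈ Λo) ∨ (x ∈ Λo ∧ y ∈ Λe))
    (I W μ J : ℝ) (hW : 0 < W) (hJ : 0 < J) (hIW : (z : ℝ) * W / 4 < I)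
    (hmu : |μ| < I + 2 * z * J) :
    {C : V → Fin 2 → Bool | ∀ C' : V → Fin 2 → Bool, HJ G I W μ J C ≤ HJ G I W μ J C'} =
      {fun x σ => decide ((x ∈ Λe) ↔ σ = 0), fun x σ => decide ((x ∈ Λo) ↔ σ = 0)} ∧
    (fun (x : V) (σ : Fin 2) => decide ((x ∈ Λe) ↔ σ = 0)) ≠
      (fun (x : V) (σ : Fin 2) => decide ((x ∈ Λo) ↔ σ = 0)) := by
  have hz₀ : 0 < z := by omega
  have hnb : ∀ x, ∃ y, G.Adj x y := fun x => (G.degree_pos_iff_exists_adj x).mp (hreg x ▸ hz₀)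
  have hflip : ∀ x y, G.Adj x y → (x ∈ Λe ↔ y ∉ Λe) := by
    intro x y hxy
    rcases hbip x y hxy with ⟨hx, hy⟩ | ⟨hx, hy⟩
    · exact iff_of_true hx (disjoint_right.mp hdisj hy)
    · exact iff_of_false (disjoint_right.mp hdisj hx) (not_not.mpr hy)
  have hΛo : neel (· ∈ Λo) = neel (· ∉ Λe) := neel_congr fun x =>
    ⟨fun hx => disjoint_right.mp hdisj hx, (hcover x).resolve_left⟩
  have := hconn.nonempty
  change {C | _} = {neel (· ∈ Λe), neel (· ∈ Λo)} ∧ neel (· ∈ Λe) ≠ neel (· ∈ Λo)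
  rw [hΛo, setOf_forall_HJ_le_eq hz₀ hreg hW hJ hIW hmu (isNeel_neel hflip)]
  refine ⟨Set.ext fun C => ?_, neel_ne_neel_not⟩
  exact isNeel_iff hconn hnb hflip
end
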